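/- arXiv:1812.01314 — 2 statements merged into one kernel-verified Lean document; each statement's English description precedes it below -/
import Mathlib

section
/- Two σ-finite measures P and Q on (Ω, ℰ) with 0 < P(Ω), Q(Ω) determine the same family of conditional probabilities—i.e., {B : 0 < P(B) < ∞} = {B : 0 < Q(B) < ∞} and P(A∩B)/P(B) = Q(A∩B)/Q(B) for all such B and all A ∈ ℰ—if and only if Q = cP for some constant c > 0. -/
/-!
Fix an event `B₀` with `0 < P B₀ < ∞` (σ-finiteness provides one) and put `c = Q B₀ / P B₀`.
For `A` of finite `P`-measure, conditioning on `B = A ∪ B₀` gives `Q A = (Q B / P B) P A` and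
`Q B₀ = (Q B / P B) P B₀`, so `Q A = c P A`. By σ-finiteness every event is an increasing union
of events of finite `P`-measure, hence `Q = c • P`.
-/

open MeasureTheory Set NNReal ENNReal

theorem ENNReal.eq_div_mul_of_div_eq {a b x y : ℝ≥0∞} (hy₀ : y ≠ 0) (hy : y ≠ ∞)
    (h : a / b = x / y) : x = y / b * a := by
  rw [← ENNReal.div_mul_cancel hy₀ hy (b := x), ← h, div_eq_mul_inv, div_eq_mul_inv]
  ring

namespace MeasureTheory.Measure

variable {Ω : Type*} [MeasurableSpace Ω] {P Q : Measure Ω}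

/-- The bunch of `μ`: the events one may condition on. -/
def finitePosSets (μ : Measure Ω) : Set (Set Ω) :=
  {B | MeasurableSet B ∧ 0 < μ B ∧ μ B < ⊤}

theorem eq_smul_of_forall_measure_lt_top [SigmaFinite P] {c : ℝ≥0∞}
    (h : ∀ A, MeasurableSet A → P A < ∞ → Q A = c * P A) : Q = c • P := by
  refine ext_of_iUnion_eq_univ (iUnion_spanningSets P) fun n => ?_
  ext A hA
  rw [restrict_apply hA, restrict_apply hA, Measure.smul_apply, smul_eq_mul]
  exact h _ (hA.inter (measurableSet_spanningSets P n))
    (measure_lt_top_of_subset inter_subset_right (measure_spanningSets_lt_top P n).ne)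

theorem finitePosSets_smul {c : ℝ≥0} (hc : c ≠ 0) (μ : Measure Ω) :
    finitePosSets (c • μ) = finitePosSets μ := by
  ext B
  simp only [finitePosSets, Measure.smul_apply, pos_iff_ne_zero, ne_eq, smul_eq_zero, hc, false_or,
    nnreal_smul_lt_top_iff hc]

theorem apply_eq_div_mul_of_conditionals_eq
    (hsets : finitePosSets P = finitePosSets Q)
    (hcond : ∀ B ∈ finitePosSets P, ∀ A, MeasurableSet A →
      P (A ∩ B) / P B = Q (A ∩ B) / Q B)
    {A B₀ : Set Ω} (hB₀ : B₀ ∈ finitePosSets P) (hA : MeasurableSet A) (hPA : P A < ∞) :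
    Q A = Q B₀ / P B₀ * P A := by
  set B := A ∪ B₀
  have hPB : B ∈ finitePosSets P := ⟨hA.union hB₀.1,
    hB₀.2.1.trans_le (measure_mono subset_union_right), measure_union_lt_top hPA hB₀.2.2⟩
  obtain ⟨-, hQB, hQB'⟩ : B ∈ finitePosSets Q := hsets ▸ hPB
  have hsub : ∀ A' ⊆ B, MeasurableSet A' → Q A' = Q B / P B * P A' := fun A' hA'B hA' =>
    ENNReal.eq_div_mul_of_div_eq hQB.ne' hQB'.ne <| by
      simpa only [inter_eq_left.2 hA'B] using hcond B hPB A' hA'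
  have hratio : Q B₀ / P B₀ = Q B / P B := by
    rw [eq_comm, ENNReal.eq_div_iff hB₀.2.1.ne' hB₀.2.2.ne, mul_comm]
    exact (hsub B₀ subset_union_right hB₀.1).symm
  rw [hratio]
  exact hsub A subset_union_left hA

end MeasureTheory.Measure

theorem same_conditionals_iff_proportional_general {Ω : Type*} [MeasurableSpace Ω]
    (P Q : Measure Ω) [SigmaFinite P]
    (hP : 0 < P Set.univ) :
    (({B : Set Ω | MeasurableSet B ∧ 0 < P B ∧ P B < ⊤} =
        {B : Set Ω | MeasurableSet B ∧ 0 < Q B ∧ Q B < ⊤}) ∧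
      ∀ B ∈ {B : Set Ω | MeasurableSet B ∧ 0 < P B ∧ P B < ⊤},
        ∀ A : Set Ω, MeasurableSet A → P (A ∩ B) / P B = Q (A ∩ B) / Q B) ↔
    ∃ c : ℝ≥0, 0 < c ∧ Q = c • P := by
  constructor
  · rintro ⟨hsets : Measure.finitePosSets P = Measure.finitePosSets Q, hcond⟩
    obtain ⟨B₀, hB₀, -, hPB₀, hPB₀'⟩ :=
      Measure.exists_subset_measure_lt_top MeasurableSet.univ hP
    have hB₀P : B₀ ∈ Measure.finitePosSets P := ⟨hB₀, hPB₀, hPB₀'⟩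
    obtain ⟨-, hQB₀, hQB₀'⟩ : B₀ ∈ Measure.finitePosSets Q := hsets ▸ hB₀P
    have hc : Q B₀ / P B₀ ≠ ∞ := (ENNReal.div_lt_top hQB₀'.ne hPB₀.ne').ne
    refine ⟨(Q B₀ / P B₀).toNNReal,
      ENNReal.toNNReal_pos (ENNReal.div_pos hQB₀.ne' hPB₀'.ne).ne' hc, ?_⟩
    rw [← Measure.coe_nnreal_smul, ENNReal.coe_toNNReal hc]
    exact Measure.eq_smul_of_forall_measure_lt_top fun A hA hPA =>
      Measure.apply_eq_div_mul_of_conditionals_eq hsets hcond hB₀P hA hPA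
  · rintro ⟨c, hc, rfl⟩
    refine ⟨(Measure.finitePosSets_smul hc.ne' P).symm, fun B _ A _ => ?_⟩
    simp only [Measure.smul_apply, ENNReal.smul_def, smul_eq_mul]
    exact (ENNReal.mul_div_mul_left _ _ (by exact_mod_cast hc.ne') coe_ne_top).symm

theorem same_conditionals_iff_proportional {Ω : Type*} [MeasurableSpace Ω]
    (P Q : Measure Ω) [SigmaFinite P] [SigmaFinite Q]
    (hP : 0 < P Set.univ) (hQ : 0 < Q Set.univ) :
    (({B : Set Ω | MeasurableSet B ∧ 0 < P B ∧ P B < ⊤} =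
        {B : Set Ω | MeasurableSet B ∧ 0 < Q B ∧ Q B < ⊤}) ∧
      ∀ B ∈ {B : Set Ω | MeasurableSet B ∧ 0 < P B ∧ P B < ⊤},
        ∀ A : Set Ω, MeasurableSet A → P (A ∩ B) / P B = Q (A ∩ B) / Q B) ↔
    ∃ c : ℝ≥0, 0 < c ∧ Q = c • P :=
  same_conditionals_iff_proportional_general P Q hP
end

section
/- Let P be a σ-finite measure on Ω, T : Ω → Ω_T measurable, and Q_T a σ-finite measure on Ω_T dominating the pushforward P_T. Suppose for each measurable A ⊆ Ω, t ↦ P^t(A) is a density of C ↦ P(A ∩ T⁻¹(C)) with respect to Q_T. Then for every measurable A ⊆ Ω and every B ∈ ℰ with 0 < P(B) < ∞, P^t(A ∩ B) = P^t(A|B) · P^t(B) holds for Q_T-almost every t, where P^t(A|B) is a density of C ↦ P(A ∩ B ∩ T⁻¹(C))/P(B) with respect to P_T(·|B), the measure C ↦ P(B ∩ T⁻¹(C))/P(B). -/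
open MeasureTheory Set NNReal ENNReal

/-- Theorem 1 of the paper: `P^t(A ∩ B) = P^t(A|B) ⬝ P^t(B)` for `Q_T`-a.e. `t`. -/
theorem renyi_posterior_factorization
    {Ω ΩT : Type*} [MeasurableSpace Ω] [MeasurableSpace ΩT]
    (P : Measure Ω) [SigmaFinite P]
    (T : Ω → ΩT) (hT : Measurable T)
    (QT : Measure ΩT) [SigmaFinite QT] (hdom : P.map T ≪ QT)
    (pt : Set Ω → ΩT → ℝ≥0∞)
    (hptMeas : ∀ A : Set Ω, MeasurableSet A → Measurable (pt A))
    (hpt : ∀ A : Set Ω, MeasurableSet A → ∀ C : Set ΩT, MeasurableSet C →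
      P (A ∩ T ⁻¹' C) = ∫⁻ t in C, pt A t ∂QT)
    (A B : Set Ω) (hA : MeasurableSet A) (hBmeas : MeasurableSet B)
    (hB : 0 < P B ∧ P B < ⊤)
    (ptB : ΩT → ℝ≥0∞) (hptBMeas : Measurable ptB)
    (hptB : ∀ C : Set ΩT, MeasurableSet C →
      P ((A ∩ B) ∩ T ⁻¹' C) / P B =
        ∫⁻ t in C, ptB t ∂(QT.withDensity (fun t => pt B t / P B))) :
    ∀ᵐ t ∂QT, pt (A ∩ B) t = ptB t * pt B t := by
  obtain ⟨hB0, hBtop⟩ := hB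
  have hPB0 : P B ≠ 0 := hB0.ne'
  have hPBtop : P B ≠ ⊤ := hBtop.ne
  have hABmeas : MeasurableSet (A ∩ B) := hA.inter hBmeas
  have hfMeas : Measurable (fun t => pt B t / P B) :=
    (hptMeas B hBmeas).div measurable_const
  refine ae_eq_of_forall_setLIntegral_eq_of_sigmaFinite
    (hptMeas (A ∩ B) hABmeas) (hptBMeas.mul (hptMeas B hBmeas)) (fun C hC _ => ?_)
  have key : ∫⁻ t in C, ptB t * pt B t ∂QT = P ((A ∩ B) ∩ T ⁻¹' C) := by
    have h1 := hptB C hC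
    rw [setLIntegral_withDensity_eq_setLIntegral_mul QT hfMeas hptBMeas hC] at h1
    have h2 : ∀ t, ((fun t => pt B t / P B) * ptB) t
        = (ptB t * pt B t) * (P B)⁻¹ := by
      intro t
      simp [div_eq_mul_inv]
      ring
    simp_rw [h2] at h1
    rw [lintegral_mul_const (f := fun t => ptB t * pt B t) _ ((hptBMeas.mul (hptMeas B hBmeas)))] at h1
    have := congrArg (fun x => x * P B) h1
    simpa [div_eq_mul_inv, mul_assoc, ENNReal.inv_mul_cancel hPB0 hPBtop] using this.symm
  rw [key, ← hpt (A ∩ B) hABmeas C hC]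
end
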